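/- Let C be a category with binary coproducts and initial object, equipped with a uniform Conway operator (−)† : Hom(X, X+A) → Hom(X, A). Then for the exception monad M_A = Id + A on C, the operator tr_α = α† for α : X ⊸ X in Kl(M_A) (i.e., α : X → X+A in C) is a fixed point operator on Kl(M_A) (tr_α · α = tr_α in Kl(M_A)) that is uniform with respect to ♯ : C → Kl(M_A). -/

import Mathlib

/-!
Reading a Kleisli morphism `X ⊸ 0` as `X ⟶ 0 ⨿ A`, both claims are the corresponding Conway
laws in `C` followed by `ι² : A ⟶ 0 ⨿ A`: the fixed point law is `[α†, id_A] ∘ α = α†`, and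
the premise of Kleisli uniformity, `h♯ · α = β · h♯`, says exactly `(h + id_A) ∘ α = β ∘ h`.
-/

open CategoryTheory CategoryTheory.Limits

namespace CategoryTheory.Limits.coprod

variable {C : Type*} [Category C] [HasBinaryCoproducts C]

lemma desc_comp_inr_inr {B A D : C} (f : B ⟶ A) :
    coprod.desc (f ≫ (coprod.inr : A ⟶ D ⨿ A)) coprod.inr = coprod.desc f (𝟙 A) ≫ coprod.inr := by
  rw [coprod.desc_comp, Category.id_comp]

lemma map_id_eq_desc {X Y A : C} (h : X ⟶ Y) :
    coprod.map h (𝟙 A) = coprod.desc (h ≫ coprod.inl) coprod.inr := by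
  ext <;> simp only [coprod.inl_map, coprod.inr_map, coprod.inl_desc, coprod.inr_desc,
    Category.id_comp]

end CategoryTheory.Limits.coprod

theorem conway_gives_uniform_fixed_point_operator
    {C : Type*} [Category C] [HasBinaryCoproducts C] [HasInitial C] (A : C)
    -- the Conway operator
    (dag : ∀ {X : C}, (X ⟶ X ⨿ A) → (X ⟶ A))
    -- the Conway fixed-point (dinaturality) identity: `f† = [f†, id_A] ∘ f`
    (hfix : ∀ {X : C} (f : X ⟶ X ⨿ A), f ≫ coprod.desc (dag f) (𝟙 A) = dag f)
    -- uniformity of `(−)†` in `C`: if `(h + id_A) ∘ α = β ∘ h` then `β† ∘ h = α†`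
    (hunif : ∀ {X Y : C} (h : X ⟶ Y) (α : X ⟶ X ⨿ A) (β : Y ⟶ Y ⨿ A),
      α ≫ coprod.map h (𝟙 A) = h ≫ β → h ≫ dag β = dag α) :
    -- `tr_α := α† ≫ ι² : X ⊸ 0` is a fixed point: `tr_α · α = tr_α` in `Kl(M_A)`
    (∀ {X : C} (α : X ⟶ X ⨿ A),
      α ≫ coprod.desc (dag α ≫ (coprod.inr : A ⟶ (⊥_ C) ⨿ A)) coprod.inr =
        dag α ≫ (coprod.inr : A ⟶ (⊥_ C) ⨿ A)) ∧
    -- uniformity w.r.t. `♯ : C → Kl(M_A)`: if `h♯ · α = β · h♯` then `tr_β · h♯ = tr_α`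
    (∀ {X Y : C} (h : X ⟶ Y) (α : X ⟶ X ⨿ A) (β : Y ⟶ Y ⨿ A),
      α ≫ coprod.desc (h ≫ (coprod.inl : Y ⟶ Y ⨿ A)) coprod.inr =
          (h ≫ (coprod.inl : Y ⟶ Y ⨿ A)) ≫ coprod.desc β coprod.inr →
        (h ≫ (coprod.inl : Y ⟶ Y ⨿ A)) ≫
            coprod.desc (dag β ≫ (coprod.inr : A ⟶ (⊥_ C) ⨿ A)) coprod.inr =
          dag α ≫ (coprod.inr : A ⟶ (⊥_ C) ⨿ A)) := by
  refine ⟨fun α => ?_, fun h α β hcompat => ?_⟩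
  · rw [coprod.desc_comp_inr_inr, ← Category.assoc, hfix]
  · have hcompat_C : α ≫ coprod.map h (𝟙 A) = h ≫ β := by
      rw [coprod.map_id_eq_desc, hcompat, Category.assoc, coprod.inl_desc]
    rw [Category.assoc, coprod.inl_desc, ← Category.assoc, hunif h α β hcompat_C]
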